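/- arXiv:2101.00025 — 2 statements merged into one kernel-verified Lean document; each statement's English description precedes it below -/
import Mathlib

section
/- Let s ≥ 32, let T₂ ≥ 0, set ζ₃ = 1/2 − 2/s, d = 2^{1−8s}/s, and a_j = 2^{1−j}/s for 1 ≤ j ≤ 8s+1, and define Λ₃(t) = α(t) + d·δ(t) + Σ_{j=1}^{8s+1} a_j·β_j(t). Assume that Λ₃(T₂) ≤ 1, and that for all t ≥ T₂ the variables satisfy α(t) ≥ 0, δ(t) ≥ 0, β_j(t) ≥ 0 for all 1 ≤ j ≤ 8s+1, 1 − 2/s ≤ Γ(t) ≤ 1, R(t) ≥ 1 + 1/(4s), and β(t) ≤ 2^{2−8s}/s². Then for any real n > 1 and any θ > 0, setting T₃ = T₂ + ((1+θ)/ζ₃)·ln n, one has α(T₃) + β(T₃) + β_{8s+1}(T₃) ≤ n^{−1−θ}·(1 + s·2^{8s+1}). -/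
/-!
The potential `Λ = α + d δ + ∑ a_j β_j` is a Lyapunov function. Since the weights halve along
the chain `β_1 → β_2 → ⋯ → β_{8s+1}`, the chain part of `Λ'` telescopes to
`a_1 (α/2) Γ + (1/2 - R) ∑_{j ≤ 8s} a_j β_j - a_{8s+1} β_{8s+1} Γ`, and with the bounds on `Γ`, `R`
and `β` every coefficient of `Λ' + ζ₃ Λ` is nonpositive. Hence `Λ' ≤ -ζ₃ Λ` on `[T₂, ∞)`, so
`Λ(T₃) ≤ e^{-ζ₃ (T₃ - T₂)} = n^{-1-θ}`. Finally every weight is at least `1 / (s 2^{8s})`, so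
`α + β + β_{8s+1} ≤ s 2^{8s} Λ`.
-/

open Finset Real

theorem le_mul_exp_of_hasDerivAt_le_neg_mul {f : ℝ → ℝ} {c a b : ℝ} (hab : a ≤ b)
    (hf : ∀ t ∈ Set.Icc a b, ∃ f', HasDerivAt f f' t ∧ f' ≤ -(c * f t)) :
    f b ≤ f a * exp (-(c * (b - a))) := by
  choose f' hf' hle using hf
  set g : ℝ → ℝ := fun t => f t * exp (c * (t - a))
  have hg : ∀ t (ht : t ∈ Set.Icc a b),
      HasDerivAt g ((f' t ht + c * f t) * exp (c * (t - a))) t := by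
    intro t ht
    have hlin : HasDerivAt (fun x => c * (x - a)) c t := by
      simpa using ((hasDerivAt_id t).sub_const a).const_mul c
    exact ((hf' t ht).mul hlin.exp).congr_deriv (by ring)
  have hanti : AntitoneOn g (Set.Icc a b) := by
    refine antitoneOn_of_deriv_nonpos (convex_Icc a b)
      (fun t ht => (hg t ht).continuousAt.continuousWithinAt)
      (fun t ht => (hg t (interior_subset ht)).differentiableAt.differentiableWithinAt)
      fun t ht => ?_
    rw [(hg t (interior_subset ht)).deriv]
    exact mul_nonpos_of_nonpos_of_nonneg (by linarith [hle t (interior_subset ht)])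
      (exp_pos _).le
  have hgb : g b ≤ g a := hanti ⟨le_rfl, hab⟩ ⟨hab, le_rfl⟩ hab
  simp only [g, sub_self, mul_zero, exp_zero, mul_one] at hgb
  rw [exp_neg, ← div_eq_mul_inv, le_div_iff₀ (exp_pos _)]
  exact hgb

theorem sum_weighted_chain {a b b' : ℕ → ℝ} {x r : ℝ} {N : ℕ} (hN : 1 ≤ N)
    (ha : ∀ j, 1 ≤ j → j ≤ N → a (j + 1) = a j / 2)
    (h1 : b' 1 = x - b 1 * r) (hj : ∀ j, 2 ≤ j → j ≤ N → b' j = b (j - 1) - b j * r) :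
    ∑ j ∈ Icc 1 N, a j * b' j + a (N + 1) * b N =
      a 1 * x + (1 / 2 - r) * ∑ j ∈ Icc 1 N, a j * b j := by
  induction N, hN using Nat.le_induction with
  | base =>
    rw [Icc_self, sum_singleton, sum_singleton, h1, ha 1 le_rfl le_rfl]
    ring
  | succ N hN ih =>
    rw [sum_Icc_succ_top (by omega), sum_Icc_succ_top (by omega),
      hj (N + 1) (by omega) le_rfl, ha (N + 1) (by omega) le_rfl, Nat.add_sub_cancel]
    have := ih (fun j h1 _ => ha j h1 (by omega)) (fun j h1 _ => hj j h1 (by omega))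
    linear_combination this

theorem hasDerivAt_sum_weighted_chain {β : ℕ → ℝ → ℝ} {a : ℕ → ℝ} {N : ℕ} {t x r g : ℝ}
    (hN : 1 ≤ N) (ha : ∀ j, 1 ≤ j → j ≤ N → a (j + 1) = a j / 2)
    (h1 : HasDerivAt (β 1) (x - β 1 t * r) t)
    (hj : ∀ j, 2 ≤ j → j ≤ N → HasDerivAt (β j) (β (j - 1) t - β j t * r) t)
    (hlast : HasDerivAt (β (N + 1)) (β N t - β (N + 1) t * g) t) :
    HasDerivAt (fun t => ∑ j ∈ Icc 1 (N + 1), a j * β j t)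
      (a 1 * x + (1 / 2 - r) * ∑ j ∈ Icc 1 N, a j * β j t - a (N + 1) * β (N + 1) t * g) t := by
  have hdiff : ∀ j ∈ Icc 1 (N + 1), DifferentiableAt ℝ (β j) t := by
    intro j hj'
    obtain ⟨hj1, hj2⟩ := mem_Icc.1 hj'
    rcases Nat.lt_or_ge j 2 with h | h
    · obtain rfl : j = 1 := by omega
      exact h1.differentiableAt
    rcases Nat.lt_or_ge j (N + 1) with h' | h'
    · exact (hj j h (by omega)).differentiableAt
    · obtain rfl : j = N + 1 := by omega
      exact hlast.differentiableAt
  refine (HasDerivAt.fun_sum fun j hj' => (hdiff j hj').hasDerivAt.const_mul (a j)).congr_deriv ?_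
  have hchain := sum_weighted_chain (b := fun j => β j t) (b' := fun j => deriv (β j) t) hN ha
    h1.deriv fun j h1 h2 => (hj j h1 h2).deriv
  rw [sum_Icc_succ_top (by omega), hlast.deriv]
  linear_combination hchain

/-- The paper's weight `a_j`; its `d` is `chainWeight s (8 s)`. -/
noncomputable def chainWeight (s j : ℕ) : ℝ := 2 ^ ((1 : ℤ) - j) / s

namespace chainWeight

variable {s : ℕ}

theorem one : chainWeight s 1 = 1 / s := by simp [chainWeight]

theorem succ (j : ℕ) : chainWeight s (j + 1) = chainWeight s j / 2 := by
  rw [chainWeight, chainWeight, Nat.cast_succ, sub_add_eq_sub_sub, zpow_sub₀ two_ne_zero,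
    zpow_one]
  ring

theorem pos (hs : 0 < s) (j : ℕ) : 0 < chainWeight s j := by unfold chainWeight; positivity

theorem antitone : Antitone (chainWeight s) := by
  intro j k hjk
  unfold chainWeight
  gcongr
  norm_num

theorem one_le_mul (hs : 0 < s) {N j : ℕ} (hj : j ≤ N + 1) :
    1 ≤ s * 2 ^ N * chainWeight s j := by
  have hsR : (0 : ℝ) < s := by exact_mod_cast hs
  have hpow : (s : ℝ) * 2 ^ N * chainWeight s j = 2 ^ ((N : ℤ) + (1 - j)) := by
    rw [chainWeight, zpow_add₀ two_ne_zero, zpow_natCast]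
    field_simp
  rw [hpow]
  exact one_le_zpow₀ one_le_two (by omega)

end chainWeight

theorem potential_rate_nonpos {s α δ Γ B R P q d : ℝ} (hs : 4 ≤ s) (hα : 0 ≤ α) (hδ : 0 ≤ δ)
    (hB : 0 ≤ B) (hq : 0 ≤ q) (hd : 0 < d) (hds : d ≤ 1 / s) (hP : d * B ≤ P)
    (hΓ : 1 - 2 / s ≤ Γ) (hR : 1 + 1 / (4 * s) ≤ R) (hBd : B ≤ 2 * d / s) :
    (-(α / 2) * (Γ - B) + δ * B)
      + d * ((α / 2) * (Γ - B) + ((1 / s - α - δ) / 2) * B - δ * Γ)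
      + (1 / s * (α / 2 * Γ) + (1 / 2 - R) * P - q * Γ)
      + (1 / 2 - 2 / s) * (α + d * δ + (P + q)) ≤ 0 := by
  -- The source `d B / (2 s)` of `δ'` is absorbed by the chain term, because `P ≥ d B`.
  set w := 1 / s with hw_def
  have hw : 0 < w := by positivity
  have hw4 : w ≤ 1 / 4 := by rw [hw_def]; gcongr
  have h2w : 2 / s = 2 * w := by ring
  rw [h2w] at hΓ ⊢
  rw [show 1 / (4 * s) = w / 4 by ring] at hR
  rw [show 2 * d / s = 2 * d * w by ring] at hBd
  have hαcoef : -(Γ - B) / 2 + d * (Γ - B) / 2 - d * B / 2 + w * Γ / 2 + (1 / 2 - 2 * w) ≤ 0 := by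
    nlinarith [mul_le_mul_of_nonneg_right hΓ (by linarith : (0:ℝ) ≤ 1 - d - w)]
  have hδcoef : B - d * B / 2 - d * Γ + (1 / 2 - 2 * w) * d ≤ 0 := by
    nlinarith [mul_le_mul_of_nonneg_left hΓ hd.le, mul_nonneg hd.le hB]
  have hPcoef : (1 / 2 - R + (1 / 2 - 2 * w)) * P + d * w / 2 * B ≤ 0 := by
    nlinarith [mul_le_mul_of_nonneg_left hP hw.le, mul_nonneg hd.le hB]
  have hqcoef : (1 / 2 - 2 * w - Γ) * q ≤ 0 :=
    mul_nonpos_of_nonpos_of_nonneg (by linarith) hq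
  nlinarith [mul_nonpos_of_nonpos_of_nonneg hαcoef hα, mul_nonpos_of_nonpos_of_nonneg hδcoef hδ]

theorem exists_hasDerivAt_potential_le {s N : ℕ} (hs : 4 ≤ s) (hN : 1 ≤ N)
    {α δ B Γ R : ℝ → ℝ} {β : ℕ → ℝ → ℝ} {a : ℕ → ℝ} {d t : ℝ}
    (ha : ∀ j, 1 ≤ j → j ≤ N + 1 → a j = chainWeight s j) (hd : d = chainWeight s N)
    (hB : B t = ∑ j ∈ Icc 1 N, β j t)
    (hα' : HasDerivAt α (-(α t / 2) * (Γ t - B t) + δ t * B t) t)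
    (hδ' : HasDerivAt δ
      ((α t / 2) * (Γ t - B t) + ((1 / (s : ℝ) - α t - δ t) / 2) * B t - δ t * Γ t) t)
    (hβ₁' : HasDerivAt (β 1) (-(β 1 t) * R t + (α t / 2) * Γ t) t)
    (hβ' : ∀ j, 2 ≤ j → j ≤ N → HasDerivAt (β j) (β (j - 1) t - β j t * R t) t)
    (hβlast' : HasDerivAt (β (N + 1)) (β N t - β (N + 1) t * Γ t) t)
    (hα : 0 ≤ α t) (hδ : 0 ≤ δ t) (hβ : ∀ j, 1 ≤ j → j ≤ N + 1 → 0 ≤ β j t)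
    (hΓ : 1 - 2 / (s : ℝ) ≤ Γ t) (hR : 1 + 1 / (4 * (s : ℝ)) ≤ R t)
    (hBd : B t ≤ 2 * d / s) :
    ∃ E, HasDerivAt (fun t => α t + d * δ t + ∑ j ∈ Icc 1 (N + 1), a j * β j t) E t ∧
      E ≤ -((1 / 2 - 2 / (s : ℝ)) * (α t + d * δ t + ∑ j ∈ Icc 1 (N + 1), a j * β j t)) := by
  have hsR : (4 : ℝ) ≤ s := by exact_mod_cast hs
  have hs0 : 0 < s := by omega
  have hchain := hasDerivAt_sum_weighted_chain (β := β) (a := a) (x := α t / 2 * Γ t) hN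
    (fun j _ _ => by rw [ha (j + 1) (by omega) (by omega), ha j (by omega) (by omega),
      chainWeight.succ])
    (hβ₁'.congr_deriv (by ring)) hβ' hβlast'
  refine ⟨_, (hα'.add (hδ'.const_mul d)).add hchain, ?_⟩
  have hdB : d * B t ≤ ∑ j ∈ Icc 1 N, a j * β j t := by
    rw [hB, mul_sum]
    refine sum_le_sum fun j hj => ?_
    obtain ⟨hj1, hj2⟩ := mem_Icc.1 hj
    rw [ha j hj1 (by omega), hd]
    exact mul_le_mul_of_nonneg_right (chainWeight.antitone hj2) (hβ j hj1 (by omega))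
  have hrate := potential_rate_nonpos hsR hα hδ
    (hB ▸ sum_nonneg fun j hj => hβ j (mem_Icc.1 hj).1 (by have := (mem_Icc.1 hj).2; omega))
    (mul_nonneg (chainWeight.pos hs0 (N + 1)).le (hβ (N + 1) (by omega) le_rfl))
    (hd ▸ chainWeight.pos hs0 N) (hd ▸ chainWeight.one (s := s) ▸ chainWeight.antitone hN)
    hdB hΓ hR hBd
  rw [sum_Icc_succ_top (by omega), ha 1 le_rfl (by omega), ha (N + 1) (by omega) le_rfl,
    chainWeight.one]
  linear_combination hrate

theorem add_sum_le_mul_potential {s N : ℕ} (hs : 0 < s) {x y d : ℝ} {a b : ℕ → ℝ}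
    (hx : 0 ≤ x) (hy : 0 ≤ y) (hd : 0 ≤ d)
    (ha : ∀ j, 1 ≤ j → j ≤ N + 1 → a j = chainWeight s j)
    (hb : ∀ j, 1 ≤ j → j ≤ N + 1 → 0 ≤ b j) :
    x + ∑ j ∈ Icc 1 (N + 1), b j ≤ s * 2 ^ N * (x + d * y + ∑ j ∈ Icc 1 (N + 1), a j * b j) := by
  have hK : (1 : ℝ) ≤ s * 2 ^ N :=
    one_le_mul_of_one_le_of_one_le (by exact_mod_cast hs) (one_le_pow₀ one_le_two)
  have hsum : ∑ j ∈ Icc 1 (N + 1), b j ≤ s * 2 ^ N * ∑ j ∈ Icc 1 (N + 1), a j * b j := by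
    rw [mul_sum]
    refine sum_le_sum fun j hj => ?_
    obtain ⟨hj1, hj2⟩ := mem_Icc.1 hj
    rw [← mul_assoc, ha j hj1 hj2]
    exact le_mul_of_one_le_left (hb j hj1 hj2) (chainWeight.one_le_mul hs hj2)
  nlinarith [mul_nonneg hd hy]

theorem stmt_16_general
    (s : ℕ) (hs : 32 ≤ s)
    (α δ : ℝ → ℝ) (β : ℕ → ℝ → ℝ) (B Γ R : ℝ → ℝ)
    (hB : ∀ t, B t = ∑ j ∈ Finset.Icc 1 (8*s), β j t)
    (hderivα : ∀ t : ℝ, 0 ≤ t → HasDerivAt α (-(α t / 2) * (Γ t - B t) + δ t * B t) t)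
    (hderivδ : ∀ t : ℝ, 0 ≤ t →
      HasDerivAt δ ((α t / 2) * (Γ t - B t) + ((1/(s:ℝ) - α t - δ t)/2) * B t - δ t * Γ t) t)
    (hderivβ1 : ∀ t : ℝ, 0 ≤ t → HasDerivAt (β 1) (-(β 1 t) * R t + (α t / 2) * Γ t) t)
    (hderivβ : ∀ j, 2 ≤ j → j ≤ 8*s → ∀ t : ℝ, 0 ≤ t →
      HasDerivAt (β j) (β (j-1) t - β j t * R t) t)
    (hderivβlast : ∀ t : ℝ, 0 ≤ t →
      HasDerivAt (β (8*s+1)) (β (8*s) t - β (8*s+1) t * Γ t) t)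
    (T₂ : ℝ) (hT₂ : 0 ≤ T₂)
    (ζ₃ d : ℝ) (a : ℕ → ℝ)
    (hζ₃ : ζ₃ = 1/2 - 2/(s:ℝ))
    (hd : d = (2:ℝ)^((1:ℤ) - 8*(s:ℤ)) / (s:ℝ))
    (ha : ∀ j, 1 ≤ j → j ≤ 8*s+1 → a j = (2:ℝ)^((1:ℤ) - (j:ℤ)) / (s:ℝ))
    (hΛ₃T₂ : α T₂ + d * δ T₂ + ∑ j ∈ Finset.Icc 1 (8*s+1), a j * β j T₂ ≤ 1)
    (hαt : ∀ t : ℝ, T₂ ≤ t → 0 ≤ α t)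
    (hδt : ∀ t : ℝ, T₂ ≤ t → 0 ≤ δ t)
    (hβt : ∀ t : ℝ, T₂ ≤ t → ∀ j, 1 ≤ j → j ≤ 8*s+1 → 0 ≤ β j t)
    (hΓt : ∀ t : ℝ, T₂ ≤ t → 1 - 2/(s:ℝ) ≤ Γ t ∧ Γ t ≤ 1)
    (hRt : ∀ t : ℝ, T₂ ≤ t → 1 + 1/(4*(s:ℝ)) ≤ R t)
    (hBt : ∀ t : ℝ, T₂ ≤ t → B t ≤ (2:ℝ)^((2:ℤ) - 8*(s:ℤ)) / (s:ℝ)^2) :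
    ∀ n θ : ℝ, 1 < n → 0 < θ →
      α (T₂ + ((1+θ)/ζ₃) * Real.log n) + B (T₂ + ((1+θ)/ζ₃) * Real.log n) +
        β (8*s+1) (T₂ + ((1+θ)/ζ₃) * Real.log n) ≤
      n ^ (-1 - θ) * (1 + (s:ℝ) * 2^(8*s+1)) := by
  intro n θ hn hθ
  set T₃ := T₂ + ((1 + θ) / ζ₃) * log n
  have hsR : (32 : ℝ) ≤ s := by exact_mod_cast hs
  have hζ : 0 < ζ₃ := by rw [hζ₃, sub_pos, div_lt_iff₀ (by positivity)]; linarith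
  have hT : T₂ ≤ T₃ := le_add_of_nonneg_right (by have := log_pos hn; positivity)
  have hd' : d = chainWeight s (8 * s) := by rw [hd, chainWeight]; push_cast; ring_nf
  have hBd : (2 : ℝ) ^ ((2 : ℤ) - 8 * s) / (s : ℝ) ^ 2 = 2 * d / s := by
    rw [hd, show (2 : ℤ) - 8 * s = 1 + (1 - 8 * s) by ring, zpow_add₀ two_ne_zero, zpow_one]
    ring
  set Λ := fun t => α t + d * δ t + ∑ j ∈ Icc 1 (8 * s + 1), a j * β j t
  have hdecay : Λ T₃ ≤ Λ T₂ * exp (-(ζ₃ * (T₃ - T₂))) := by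
    refine le_mul_exp_of_hasDerivAt_le_neg_mul hT fun t ⟨ht, _⟩ => ?_
    have h0 : 0 ≤ t := hT₂.trans ht
    rw [hζ₃]
    exact exists_hasDerivAt_potential_le (by omega) (by omega) ha hd' (hB t) (hderivα t h0)
      (hderivδ t h0) (hderivβ1 t h0) (fun j hj1 hj2 => hderivβ j hj1 hj2 t h0) (hderivβlast t h0)
      (hαt t ht) (hδt t ht) (hβt t ht) (hΓt t ht).1 (hRt t ht) (hBd ▸ hBt t ht)
  have hexp : exp (-(ζ₃ * (T₃ - T₂))) = n ^ (-1 - θ) := by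
    rw [rpow_def_of_pos (by linarith), show ζ₃ * (T₃ - T₂) = (1 + θ) * log n by
      simp only [T₃]; field_simp; ring]
    ring_nf
  have hΛ : Λ T₃ ≤ n ^ (-1 - θ) :=
    hexp ▸ hdecay.trans (mul_le_of_le_one_left (exp_pos _).le hΛ₃T₂)
  have hbound := add_sum_le_mul_potential (N := 8 * s) (by omega) (hαt T₃ hT) (hδt T₃ hT)
    (hd' ▸ (chainWeight.pos (by omega) _).le) ha (hβt T₃ hT)
  rw [hB, add_assoc, ← sum_Icc_succ_top (by omega)]
  calc _ ≤ s * 2 ^ (8 * s) * Λ T₃ := hbound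
    _ ≤ s * 2 ^ (8 * s) * n ^ (-1 - θ) := by gcongr
    _ ≤ n ^ (-1 - θ) * (1 + s * 2 ^ (8 * s + 1)) := by
      have hpos : 0 < n ^ (-1 - θ) := rpow_pos_of_pos (by linarith) _
      have hK : (0 : ℝ) ≤ s * 2 ^ (8 * s) := by positivity
      rw [pow_succ]
      nlinarith [mul_nonneg hpos.le hK]

theorem stmt_16
    (s : ℕ) (hs : 32 ≤ s)
    (α δ : ℝ → ℝ) (β γ : ℕ → ℝ → ℝ) (B Γ u R : ℝ → ℝ)
    (hB : ∀ t, B t = ∑ j ∈ Finset.Icc 1 (8*s), β j t)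
    (hΓ : ∀ t, Γ t = ∑ j ∈ Finset.Icc 1 (8*s), γ j t)
    (hu : ∀ t, u t = 1 - 1/(s:ℝ) - Γ t)
    (hR : ∀ t, R t = 1 + 1/(2*(s:ℝ)) - δ t / 2 - u t)
    (hderivα : ∀ t : ℝ, 0 ≤ t → HasDerivAt α (-(α t / 2) * (Γ t - B t) + δ t * B t) t)
    (hderivδ : ∀ t : ℝ, 0 ≤ t →
      HasDerivAt δ ((α t / 2) * (Γ t - B t) + ((1/(s:ℝ) - α t - δ t)/2) * B t - δ t * Γ t) t)
    (hderivβ1 : ∀ t : ℝ, 0 ≤ t → HasDerivAt (β 1) (-(β 1 t) * R t + (α t / 2) * Γ t) t)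
    (hderivβ : ∀ j, 2 ≤ j → j ≤ 8*s → ∀ t : ℝ, 0 ≤ t →
      HasDerivAt (β j) (β (j-1) t - β j t * R t) t)
    (hderivγ1 : ∀ t : ℝ, 0 ≤ t →
      HasDerivAt (γ 1) (-(γ 1 t) * R t + (1/(2*(s:ℝ)) - δ t / 2) * Γ t) t)
    (hderivγ : ∀ j, 2 ≤ j → j ≤ 8*s → ∀ t : ℝ, 0 ≤ t →
      HasDerivAt (γ j) (γ (j-1) t - γ j t * R t) t)
    (hderivβlast : ∀ t : ℝ, 0 ≤ t →
      HasDerivAt (β (8*s+1)) (β (8*s) t - β (8*s+1) t * Γ t) t)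
    (T₂ : ℝ) (hT₂ : 0 ≤ T₂)
    (ζ₃ d : ℝ) (a : ℕ → ℝ)
    (hζ₃ : ζ₃ = 1/2 - 2/(s:ℝ))
    (hd : d = (2:ℝ)^((1:ℤ) - 8*(s:ℤ)) / (s:ℝ))
    (ha : ∀ j, 1 ≤ j → j ≤ 8*s+1 → a j = (2:ℝ)^((1:ℤ) - (j:ℤ)) / (s:ℝ))
    (hΛ₃T₂ : α T₂ + d * δ T₂ + ∑ j ∈ Finset.Icc 1 (8*s+1), a j * β j T₂ ≤ 1)
    (hαt : ∀ t : ℝ, T₂ ≤ t → 0 ≤ α t)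
    (hδt : ∀ t : ℝ, T₂ ≤ t → 0 ≤ δ t)
    (hβt : ∀ t : ℝ, T₂ ≤ t → ∀ j, 1 ≤ j → j ≤ 8*s+1 → 0 ≤ β j t)
    (hΓt : ∀ t : ℝ, T₂ ≤ t → 1 - 2/(s:ℝ) ≤ Γ t ∧ Γ t ≤ 1)
    (hRt : ∀ t : ℝ, T₂ ≤ t → 1 + 1/(4*(s:ℝ)) ≤ R t)
    (hBt : ∀ t : ℝ, T₂ ≤ t → B t ≤ (2:ℝ)^((2:ℤ) - 8*(s:ℤ)) / (s:ℝ)^2) :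
    ∀ n θ : ℝ, 1 < n → 0 < θ →
      α (T₂ + ((1+θ)/ζ₃) * Real.log n) + B (T₂ + ((1+θ)/ζ₃) * Real.log n) +
        β (8*s+1) (T₂ + ((1+θ)/ζ₃) * Real.log n) ≤
      n ^ (-1 - θ) * (1 + (s:ℝ) * 2^(8*s+1)) :=
  stmt_16_general s hs α δ β B Γ R hB hderivα hderivδ hderivβ1 hderivβ hderivβlast T₂ hT₂ ζ₃ d a hζ₃
    hd ha hΛ₃T₂ hαt hδt hβt hΓt hRt hBt
end

section
/- Let s ≥ 32 and ρ ∈ (0, 1/2). Assume the Phase-I standing bounds: for all t ≥ 0, 0 ≤ δ(t) ≤ 0.2/s, γ_j(t) > 0 for all 1 ≤ j ≤ 8s, γ_{j−1}(t)/γ_j(t) ≥ 1/2 for all 2 ≤ j ≤ 8s, γ_1(t) ≤ 1/s, 1 − 2/s ≤ Γ(t) ≤ 1, 1/s − δ(t) > 0, and Φ is nondecreasing on [0,∞) with Φ(0) = ρ. Then the time t* = 144·s·log₂(1/ρ) satisfies Φ(t*) ≥ 1/2. -/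
/-!
Along the chain `ξ → η₁ → η₂ → ⋯ → η_{8s}` every advantage `η_j` relaxes towards its
predecessor at rate `γ_{j-1}/γ_j ≥ 1/2` (for `η₁` the rate is `Γ(1/s - δ)/(2γ₁) ≥ 3/8`), while
`ξ` is driven by the aggregate advantage `η`, a weighted mean of the `η_j`; the Phase-I bounds make
this drift at least `Φ/80`.

Fix `t₀` with `m = Φ t₀ < 1/2` and put `r = m/(80s)`. The functions `ξ` and `η_j + 3rj` start
above the line `m + r(t - t₀)`, and none of them can cross it first: a function touching the line
while the others are above it has derivative `> r`. Following the line for at most `72s` time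
units gives `Φ ≥ min(√2 m, 1/2)`, and `2 log₂(1/ρ)` such rounds reach `1/2`.
-/

open Set

theorem line_le_of_deriv_gt_at_contact {ι : Type*} (I : Finset ι) {V : ι → ℝ → ℝ}
    {a b c r : ℝ} (hV : ∀ i ∈ I, ∀ t ∈ Icc a b, DifferentiableAt ℝ (V i) t)
    (ha : ∀ i ∈ I, c ≤ V i a)
    (hcontact : ∀ t ∈ Ico a b, (∀ i ∈ I, c + r * (t - a) ≤ V i t) →
      ∀ i ∈ I, V i t = c + r * (t - a) → r < deriv (V i) t) :
    ∀ t ∈ Icc a b, ∀ i ∈ I, c + r * (t - a) ≤ V i t := by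
  set L : ℝ → ℝ := fun t => c + r * (t - a)
  have hL : ∀ t, HasDerivAt L r t := fun t =>
    ((((hasDerivAt_id t).sub_const a).const_mul r).const_add c).congr_deriv (mul_one r)
  set S := {t | ∀ i ∈ I, L t ≤ V i t}
  have hclosed : IsClosed (S ∩ Icc a b) := by
    have hS : S ∩ Icc a b = Icc a b ∩ ⋂ i ∈ I, {t ∈ Icc a b | L t ≤ V i t} := by
      ext t; simp only [S, mem_inter_iff, mem_iInter, mem_ofPred_eq]; grind
    rw [hS]
    refine isClosed_Icc.inter (isClosed_biInter fun i hi => isClosed_Icc.isClosed_le ?_ ?_)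
    · exact fun t _ => (hL t).continuousAt.continuousWithinAt
    · exact fun t ht => (hV i hi t ht).continuousAt.continuousWithinAt
  refine fun t ht => hclosed.Icc_subset_of_forall_mem_nhdsWithin (by simpa [S, L] using ha) ?_ ht
  rintro t ⟨htS, htI⟩
  refine (I.eventually_all).2 fun i hi => ?_
  have hVi := (hV i hi t (Ico_subset_Icc_self htI)).hasDerivAt
  rcases (htS i hi).lt_or_eq with hlt | heq
  · exact nhdsWithin_le_nhds ((hL t).continuousAt.eventually_lt hVi.continuousAt hlt |>.mono
      fun _ => le_of_lt)
  · -- at a contact point `V i - L` vanishes with positive derivative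
    have hpos : 0 < deriv (V i) t - r := sub_pos.2 (hcontact t htI htS i hi heq.symm)
    have hslope := hasDerivAt_iff_tendsto_slope.1 (hVi.sub (hL t))
    filter_upwards [nhdsGT_le_nhdsNE t (hslope.eventually (eventually_gt_nhds hpos)),
      self_mem_nhdsWithin] with u hu htu
    exact sub_nonneg.1 (pos_of_slope_pos htu hu (by simp [← heq])).le

theorem min_mul_sqrt_two_pow_le {Φ : ℝ → ℝ} {ρ T : ℝ} (hρ : 0 < ρ) (hT : 0 ≤ T)
    (hmono : MonotoneOn Φ (Ici 0)) (hΦ0 : Φ 0 = ρ)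
    (hstep : ∀ t, 0 ≤ t → 0 < Φ t → Φ t < 1 / 2 → min (√2 * Φ t) (1 / 2) ≤ Φ (t + T))
    (n : ℕ) : min (ρ * √2 ^ n) (1 / 2) ≤ Φ (n * T) := by
  induction n with
  | zero => simp [hΦ0]
  | succ n ih =>
    have hnT : 0 ≤ n * T := by positivity
    have hsucc : ((n + 1 : ℕ) : ℝ) * T = n * T + T := by push_cast; ring
    rcases lt_or_ge (Φ (n * T)) (1 / 2) with hlt | hge
    · have hρΦ : ρ * √2 ^ n ≤ Φ (n * T) := (min_le_iff.1 ih).resolve_right hlt.not_ge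
      have hpos : 0 < Φ (n * T) := hρ.trans_le (hΦ0 ▸ hmono (mem_Ici.2 le_rfl) hnT hnT)
      calc min (ρ * √2 ^ (n + 1)) (1 / 2) = min (√2 * (ρ * √2 ^ n)) (1 / 2) := by
            rw [pow_succ]; ring_nf
        _ ≤ min (√2 * Φ (n * T)) (1 / 2) := by gcongr
        _ ≤ Φ (n * T + T) := hstep _ hnT hpos hlt
        _ = Φ ((n + 1 : ℕ) * T) := by rw [hsucc]
    · have hnT' : 0 ≤ ((n + 1 : ℕ) : ℝ) * T := by positivity
      exact (min_le_right _ _).trans (hge.trans (hmono hnT hnT' (by rw [hsucc]; linarith)))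

theorem half_le_of_min_sqrt_two_mul_le {Φ : ℝ → ℝ} {ρ T : ℝ} (hρ : 0 < ρ) (hρ1 : ρ ≤ 1)
    (hT : 0 ≤ T) (hmono : MonotoneOn Φ (Ici 0)) (hΦ0 : Φ 0 = ρ)
    (hstep : ∀ t, 0 ≤ t → 0 < Φ t → Φ t < 1 / 2 → min (√2 * Φ t) (1 / 2) ≤ Φ (t + T)) :
    1 / 2 ≤ Φ (2 * T * Real.logb 2 (1 / ρ)) := by
  set L := Real.logb 2 (1 / ρ)
  have hL : 0 ≤ L := Real.logb_nonneg one_lt_two (by rw [le_div_iff₀ hρ]; linarith)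
  set n := ⌊2 * L⌋₊
  have hn : 2 * L - 1 < n := by linarith [Nat.lt_floor_add_one (2 * L)]
  have hpow : 1 / 2 ≤ ρ * √2 ^ n := by
    have hsqrt : √2 ^ n = 2 ^ ((n : ℝ) / 2) := by
      rw [Real.sqrt_eq_rpow, ← Real.rpow_natCast, ← Real.rpow_mul zero_le_two]
      ring_nf
    have hL2 : (2 : ℝ) ^ (L - 1) = 1 / ρ / 2 := by
      rw [Real.rpow_sub two_pos, Real.rpow_one,
        Real.rpow_logb two_pos (by norm_num) (by positivity)]
    calc 1 / 2 = ρ * 2 ^ (L - 1) := by rw [hL2]; field_simp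
      _ ≤ ρ * √2 ^ n := by
        rw [hsqrt]
        gcongr
        · exact one_le_two
        · linarith
  calc 1 / 2 ≤ min (ρ * √2 ^ n) (1 / 2) := le_min hpow le_rfl
    _ ≤ Φ (n * T) := min_mul_sqrt_two_pow_le hρ hT hmono hΦ0 hstep n
    _ ≤ Φ (2 * T * L) := by
      refine hmono (mem_Ici.2 (by positivity)) (mem_Ici.2 (by positivity)) ?_
      nlinarith [Nat.floor_le (by positivity : 0 ≤ 2 * L)]

/-- In the Phase-I system `g = Γ`, `c = δΓ/(1/s - δ)`, `e` is the aggregate advantage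
`(Γ - 2β)/Γ`, `k₁ = (1/(2s) - δ/2)Γ/γ₁` and `k_j = γ_{j-1}/γ_j`. -/
structure IsAdvantageCascade (N : ℕ) (ξ : ℝ → ℝ) (η : ℕ → ℝ → ℝ) : Prop where
  xi : ∀ t, 0 ≤ t → ∃ g c e : ℝ, 15 / 16 ≤ g ∧ 0 ≤ c ∧ c ≤ 1 / 4 ∧
    (∀ y, (∀ j ∈ Finset.Icc 1 N, y ≤ η j t) → y ≤ e) ∧
    HasDerivAt ξ (g / 4 * (1 - ξ t ^ 2) * e + c * (e - ξ t)) t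
  eta_one : ∀ t, 0 ≤ t → ∃ k : ℝ, 3 / 8 ≤ k ∧ HasDerivAt (η 1) (k * (ξ t - η 1 t)) t
  eta : ∀ j ∈ Finset.Icc 2 N, ∀ t, 0 ≤ t →
    ∃ k : ℝ, 3 / 8 ≤ k ∧ HasDerivAt (η j) (k * (η (j - 1) t - η j t)) t

/-- Raising `η i` by `i κ` turns a contact of `η i` with a common lower barrier into a gap
`≥ κ` below its predecessor. -/
def shiftedAdvantage (ξ : ℝ → ℝ) (η : ℕ → ℝ → ℝ) (κ : ℝ) : ℕ → ℝ → ℝ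
  | 0 => ξ
  | i + 1 => fun t => η (i + 1) t + (i + 1 : ℕ) * κ

namespace IsAdvantageCascade

variable {N : ℕ} {ξ : ℝ → ℝ} {η : ℕ → ℝ → ℝ} {t : ℝ}

theorem lt_deriv_xi (h : IsAdvantageCascade N ξ η) (ht : 0 ≤ t) {m : ℝ} (hm : 0 < m)
    (hmξ : m ≤ ξ t) (hξ : ξ t ≤ 13 / 20) (hη : ∀ j ∈ Finset.Icc 1 N, ξ t - 3 * m / 10 ≤ η j t) :
    m / 80 < deriv ξ t := by
  obtain ⟨g, c, e, hg, hc0, hc, he, hd⟩ := h.xi t ht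
  have he' : ξ t - 3 * m / 10 ≤ e := he _ hη
  have hdrift : 3 * m / 32 ≤ g / 4 * (1 - ξ t ^ 2) * e := by
    have hξ2 : 231 / 400 ≤ 1 - ξ t ^ 2 := by nlinarith
    calc 3 * m / 32 ≤ 15 / 16 / 4 * (231 / 400) * (7 * m / 10) := by linarith
      _ ≤ g / 4 * (1 - ξ t ^ 2) * e := by gcongr; linarith
  have hloss : -(3 * m / 40) ≤ c * (e - ξ t) := by nlinarith
  rw [hd.deriv]
  linarith

theorem lt_deriv_eta_one (h : IsAdvantageCascade N ξ η) (ht : 0 ≤ t) {r : ℝ} (hr : 0 < r)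
    (hgap : 3 * r ≤ ξ t - η 1 t) : r < deriv (η 1) t := by
  obtain ⟨k, hk, hd⟩ := h.eta_one t ht
  rw [hd.deriv]
  nlinarith

theorem lt_deriv_eta (h : IsAdvantageCascade N ξ η) {j : ℕ} (hj : j ∈ Finset.Icc 2 N)
    (ht : 0 ≤ t) {r : ℝ} (hr : 0 < r) (hgap : 3 * r ≤ η (j - 1) t - η j t) :
    r < deriv (η j) t := by
  obtain ⟨k, hk, hd⟩ := h.eta j hj t ht
  rw [hd.deriv]
  nlinarith

theorem differentiableAt_shiftedAdvantage (h : IsAdvantageCascade N ξ η) (κ : ℝ) {i : ℕ}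
    (hi : i ≤ N) (ht : 0 ≤ t) : DifferentiableAt ℝ (shiftedAdvantage ξ η κ i) t := by
  rcases i with _ | _ | i
  · obtain ⟨_, _, _, _, _, _, _, hd⟩ := h.xi t ht
    exact hd.differentiableAt
  · obtain ⟨_, _, hd⟩ := h.eta_one t ht
    exact hd.differentiableAt.add_const _
  · obtain ⟨_, _, hd⟩ := h.eta (i + 2) (Finset.mem_Icc.2 ⟨by omega, hi⟩) t ht
    exact hd.differentiableAt.add_const _

theorem lt_deriv_shiftedAdvantage (h : IsAdvantageCascade N ξ η) (ht : 0 ≤ t) {m r x : ℝ}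
    (hm : 0 < m) (hr : 0 < r) (hr80 : r ≤ m / 80) (hNr : N * (3 * r) ≤ 3 * m / 10)
    (hmx : m ≤ x) (hx : x ≤ 13 / 20) (hall : ∀ i ≤ N, x ≤ shiftedAdvantage ξ η (3 * r) i t)
    {i : ℕ} (hi : i ≤ N) (hcontact : shiftedAdvantage ξ η (3 * r) i t = x) :
    r < deriv (shiftedAdvantage ξ η (3 * r) i) t := by
  rcases i with _ | _ | i
  · simp only [shiftedAdvantage] at hcontact ⊢
    refine hr80.trans_lt (h.lt_deriv_xi ht hm (by linarith) (by linarith) fun j hj => ?_)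
    obtain ⟨hj1, hjN⟩ := Finset.mem_Icc.1 hj
    obtain ⟨j, rfl⟩ := Nat.exists_eq_add_of_le' hj1
    have hshift : ((j + 1 : ℕ) : ℝ) * (3 * r) ≤ N * (3 * r) := by gcongr
    have hj := hall (j + 1) hjN
    simp only [shiftedAdvantage] at hj
    linarith
  · have h0 := hall 0 (Nat.zero_le _)
    simp only [shiftedAdvantage, zero_add, Nat.cast_one, one_mul, deriv_add_const] at h0 hcontact ⊢
    exact h.lt_deriv_eta_one ht hr (by linarith)
  · have hprev := hall (i + 1) (by omega)
    simp only [shiftedAdvantage, deriv_add_const] at hprev hcontact ⊢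
    refine h.lt_deriv_eta (Finset.mem_Icc.2 ⟨by omega, hi⟩) ht hr ?_
    push_cast at hprev hcontact ⊢
    linarith

theorem line_le_shiftedAdvantage (h : IsAdvantageCascade N ξ η) {t₀ b m r : ℝ} (ht₀ : 0 ≤ t₀)
    (hm : 0 < m) (hr : 0 < r) (hr80 : r ≤ m / 80) (hNr : N * (3 * r) ≤ 3 * m / 10)
    (hb : m + r * (b - t₀) ≤ 13 / 20) (hξ : m ≤ ξ t₀) (hη : ∀ j ∈ Finset.Icc 1 N, m ≤ η j t₀) :
    ∀ t ∈ Icc t₀ b, ∀ i ∈ Finset.range (N + 1),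
      m + r * (t - t₀) ≤ shiftedAdvantage ξ η (3 * r) i t := by
  refine line_le_of_deriv_gt_at_contact _ (fun i hi t ht => ?_) (fun i hi => ?_) ?_
  · exact h.differentiableAt_shiftedAdvantage _ (Finset.mem_range_succ_iff.1 hi) (ht₀.trans ht.1)
  · rcases i with _ | i
    · exact hξ
    · have := hη (i + 1) (Finset.mem_Icc.2 ⟨by omega, Finset.mem_range_succ_iff.1 hi⟩)
      have : 0 ≤ ((i + 1 : ℕ) : ℝ) * (3 * r) := by positivity
      simp only [shiftedAdvantage]
      linarith
  · intro t ht hall i hi hcontact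
    refine h.lt_deriv_shiftedAdvantage (ht₀.trans ht.1) hm hr hr80 hNr (by nlinarith [ht.1])
      (by nlinarith [ht.2]) (fun j hj => hall j (Finset.mem_range_succ_iff.2 hj))
      (Finset.mem_range_succ_iff.1 hi) hcontact

theorem exists_min_sqrt_two_mul_le (h : IsAdvantageCascade N ξ η) (hN : 8 ≤ N) {t₀ m : ℝ}
    (ht₀ : 0 ≤ t₀) (hm : 0 < m) (hm' : m < 1 / 2) (hξ : m ≤ ξ t₀)
    (hη : ∀ j ∈ Finset.Icc 1 N, m ≤ η j t₀) :
    ∃ b ∈ Icc t₀ (t₀ + 9 * N), min (√2 * m) (1 / 2) ≤ ξ b ∧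
      ∀ j ∈ Finset.Icc 1 N, min (√2 * m) (1 / 2) ≤ η j b := by
  set M := min (√2 * m) (1 / 2)
  have hN8 : (8 : ℝ) ≤ N := by exact_mod_cast hN
  set r := m / (10 * N)
  have hr : 0 < r := by positivity
  have hNr : N * (3 * r) = 3 * m / 10 := by simp only [r]; field_simp
  have hsqrt : √2 ≤ 8 / 5 := Real.sqrt_le_iff.2 ⟨by norm_num, by norm_num⟩
  have hmM : m ≤ M := le_min (by nlinarith [Real.one_lt_sqrt_two]) hm'.le
  have hM : M ≤ 8 * m / 5 := (min_le_left _ _).trans (by nlinarith)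
  have hM2 : M ≤ 1 / 2 := min_le_right _ _
  -- the barrier line climbs from `m` at `t₀` to `M + 3m/10` at `b`
  set b := t₀ + (M - 7 * m / 10) / r
  have hrb : r * (b - t₀) = M - 7 * m / 10 := by
    simp only [b, add_sub_cancel_left]; field_simp
  have hb : b ∈ Icc t₀ (t₀ + 9 * N) := by
    have h9 : 9 * (N : ℝ) * r = 9 * m / 10 := by simp only [r]; field_simp
    constructor <;> nlinarith
  have hV := h.line_le_shiftedAdvantage ht₀ hm hr
    (div_le_div_of_nonneg_left hm.le (by norm_num) (by linarith)) hNr.le (by linarith) hξ hη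
    b (right_mem_Icc.2 hb.1)
  refine ⟨b, hb, ?_, fun j hj => ?_⟩
  · have h0 := hV 0 (by simp)
    simp only [shiftedAdvantage] at h0
    linarith
  · obtain ⟨hj1, hjN⟩ := Finset.mem_Icc.1 hj
    obtain ⟨j, rfl⟩ := Nat.exists_eq_add_of_le' hj1
    have hshift : ((j + 1 : ℕ) : ℝ) * (3 * r) ≤ N * (3 * r) := by gcongr
    have hj := hV (j + 1) (Finset.mem_range_succ_iff.2 hjN)
    simp only [shiftedAdvantage] at hj
    linarith

theorem min_sqrt_two_mul_le (h : IsAdvantageCascade N ξ η) (hN : 8 ≤ N) {Φ : ℝ → ℝ}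
    {hne : (Finset.Icc 1 N).Nonempty}
    (hΦ : ∀ t, Φ t = min (ξ t) ((Finset.Icc 1 N).inf' hne fun j => η j t))
    (hmono : MonotoneOn Φ (Ici 0)) (ht : 0 ≤ t) (hpos : 0 < Φ t) (hhalf : Φ t < 1 / 2) :
    min (√2 * Φ t) (1 / 2) ≤ Φ (t + 9 * N) := by
  have hle : ∀ u y, y ≤ Φ u ↔ y ≤ ξ u ∧ ∀ j ∈ Finset.Icc 1 N, y ≤ η j u := fun u y => by
    rw [hΦ, le_min_iff, Finset.le_inf'_iff]
  obtain ⟨hξ, hη⟩ := (hle t _).1 le_rfl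
  obtain ⟨b, hb, hξb, hηb⟩ := h.exists_min_sqrt_two_mul_le hN ht hpos hhalf hξ hη
  exact ((hle b _).2 ⟨hξb, hηb⟩).trans (hmono (ht.trans hb.1) (by simp; positivity) hb.2)

end IsAdvantageCascade

theorem hasDerivAt_advantage {f g b : ℝ → ℝ} {p q R t : ℝ}
    (hf : ∀ u, f u = (g u - 2 * b u) / g u) (hg : HasDerivAt g (p - g t * R) t)
    (hb : HasDerivAt b (q - b t * R) t) (hg0 : g t ≠ 0) (hp : p ≠ 0) :
    HasDerivAt f (p / g t * ((p - 2 * q) / p - f t)) t := by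
  obtain rfl : f = fun u => (g u - 2 * b u) / g u := funext hf
  refine ((hg.sub (hb.const_mul 2)).div hg hg0).congr_deriv ?_
  simp only [Pi.sub_apply]
  field_simp
  ring

theorem hasDerivAt_xi {f α δ : ℝ → ℝ} {c Γ B t : ℝ}
    (hf : ∀ u, f u = (c - δ u - 2 * α u) / (c - δ u))
    (hα : HasDerivAt α (-(α t / 2) * (Γ - B) + δ t * B) t)
    (hδ : HasDerivAt δ (α t / 2 * (Γ - B) + (c - α t - δ t) / 2 * B - δ t * Γ) t)
    (hD : c - δ t ≠ 0) (hΓ : Γ ≠ 0) :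
    HasDerivAt f (Γ / 4 * (1 - f t ^ 2) * ((Γ - 2 * B) / Γ) +
      δ t * Γ / (c - δ t) * ((Γ - 2 * B) / Γ - f t)) t := by
  obtain rfl : f = fun u => (c - δ u - 2 * α u) / (c - δ u) := funext hf
  refine ((((hasDerivAt_const t c).sub hδ).sub (hα.const_mul 2)).div
    ((hasDerivAt_const t c).sub hδ) hD).congr_deriv ?_
  simp only [Pi.sub_apply] at hD ⊢
  field_simp
  ring

theorem hasDerivAt_eta_one {f g b : ℝ → ℝ} {s d a Γ R t : ℝ}
    (hf : ∀ u, f u = (g u - 2 * b u) / g u)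
    (hg : HasDerivAt g (-(g t) * R + (1 / (2 * s) - d / 2) * Γ) t)
    (hb : HasDerivAt b (-(b t) * R + a / 2 * Γ) t) (hg0 : g t ≠ 0) (hD : 1 / s - d ≠ 0)
    (hΓ : Γ ≠ 0) :
    HasDerivAt f
      ((1 / (2 * s) - d / 2) * Γ / g t * ((1 / s - d - 2 * a) / (1 / s - d) - f t)) t := by
  have hp : (1 / (2 * s) - d / 2) * Γ = (1 / s - d) / 2 * Γ := by ring
  have hp0 : (1 / (2 * s) - d / 2) * Γ ≠ 0 := by
    rw [hp]; exact mul_ne_zero (div_ne_zero hD two_ne_zero) hΓ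
  have hsrc : ((1 / (2 * s) - d / 2) * Γ - 2 * (a / 2 * Γ)) / ((1 / (2 * s) - d / 2) * Γ) =
      (1 / s - d - 2 * a) / (1 / s - d) := by
    rw [div_eq_div_iff hp0 hD, hp]
    ring
  have h := hasDerivAt_advantage (q := a / 2 * Γ) (R := R) hf (hg.congr_deriv (by ring))
    (hb.congr_deriv (by ring)) hg0 hp0
  rwa [hsrc] at h

theorem le_aggregate_advantage {ι : Type*} {S : Finset ι} {γ β : ι → ℝ} {y : ℝ}
    (hS : S.Nonempty) (hγ : ∀ j ∈ S, 0 < γ j) (h : ∀ j ∈ S, y ≤ (γ j - 2 * β j) / γ j) :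
    y ≤ (∑ j ∈ S, γ j - 2 * ∑ j ∈ S, β j) / ∑ j ∈ S, γ j := by
  rw [le_div_iff₀ (Finset.sum_pos hγ hS), Finset.mul_sum, Finset.mul_sum, ← Finset.sum_sub_distrib]
  exact Finset.sum_le_sum fun j hj => (le_div_iff₀ (hγ j hj)).1 (h j hj)

theorem delta_mul_div_le_one_fourth {s δ Γ : ℝ} (hs : 0 < s) (hδ0 : 0 ≤ δ) (hδ : δ ≤ 0.2 / s)
    (hΓ : Γ ≤ 1) : δ * Γ / (1 / s - δ) ≤ 1 / 4 := by
  have h5 : 5 * δ ≤ 1 / s := by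
    rw [le_div_iff₀ hs] at hδ ⊢
    linarith
  rw [div_le_iff₀ (by linarith [one_div_pos.2 hs])]
  nlinarith

theorem three_eighths_le_eta_one_rate {s δ Γ γ₁ : ℝ} (hs : 0 < s) (hδ : δ ≤ 0.2 / s)
    (hΓ : 15 / 16 ≤ Γ) (hγ₀ : 0 < γ₁) (hγ : γ₁ ≤ 1 / s) :
    3 / 8 ≤ (1 / (2 * s) - δ / 2) * Γ / γ₁ := by
  have h5 : 2 / (5 * s) ≤ 1 / (2 * s) - δ / 2 := by
    have : 1 / (2 * s) - 2 / (5 * s) = 0.2 / s / 2 := by field_simp; norm_num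
    linarith
  rw [le_div_iff₀ hγ₀]
  calc 3 / 8 * γ₁ ≤ 2 / (5 * s) * (15 / 16) := by
        have : 2 / (5 * s) * (15 / 16) = 3 / 8 * (1 / s) := by field_simp; norm_num
        rw [this]; gcongr
    _ ≤ (1 / (2 * s) - δ / 2) * Γ := by gcongr; linarith [show 0 < 2 / (5 * s) by positivity]

theorem stmt_17
    (s : ℕ) (hs : 32 ≤ s)
    (α δ : ℝ → ℝ) (β γ : ℕ → ℝ → ℝ) (B Γ R : ℝ → ℝ)
    (hB : ∀ t, B t = ∑ j ∈ Finset.Icc 1 (8*s), β j t)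
    (hΓ : ∀ t, Γ t = ∑ j ∈ Finset.Icc 1 (8*s), γ j t)
    (hderivα : ∀ t : ℝ, 0 ≤ t → HasDerivAt α (-(α t / 2) * (Γ t - B t) + δ t * B t) t)
    (hderivδ : ∀ t : ℝ, 0 ≤ t →
      HasDerivAt δ ((α t / 2) * (Γ t - B t) + ((1/(s:ℝ) - α t - δ t)/2) * B t - δ t * Γ t) t)
    (hderivβ1 : ∀ t : ℝ, 0 ≤ t → HasDerivAt (β 1) (-(β 1 t) * R t + (α t / 2) * Γ t) t)
    (hderivβ : ∀ j, 2 ≤ j → j ≤ 8*s → ∀ t : ℝ, 0 ≤ t →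
      HasDerivAt (β j) (β (j-1) t - β j t * R t) t)
    (hderivγ1 : ∀ t : ℝ, 0 ≤ t →
      HasDerivAt (γ 1) (-(γ 1 t) * R t + (1/(2*(s:ℝ)) - δ t / 2) * Γ t) t)
    (hderivγ : ∀ j, 2 ≤ j → j ≤ 8*s → ∀ t : ℝ, 0 ≤ t →
      HasDerivAt (γ j) (γ (j-1) t - γ j t * R t) t)
    (ξ : ℝ → ℝ) (ηj : ℕ → ℝ → ℝ)
    (hξ : ∀ t, ξ t = (1/(s:ℝ) - δ t - 2 * α t) / (1/(s:ℝ) - δ t))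
    (hηj : ∀ j, 1 ≤ j → j ≤ 8*s → ∀ t, ηj j t = (γ j t - 2 * β j t) / γ j t)
    (ρ : ℝ) (hρ : 0 < ρ) (hρ' : ρ < 1/2)
    (Φ : ℝ → ℝ)
    (hΦ : ∀ t, Φ t = min (ξ t)
      ((Finset.Icc 1 (8*s)).inf' (Finset.nonempty_Icc.mpr (by omega)) (fun j => ηj j t)))
    (hδb : ∀ t : ℝ, 0 ≤ t → 0 ≤ δ t ∧ δ t ≤ 0.2 / (s:ℝ))
    (hγpos : ∀ t : ℝ, 0 ≤ t → ∀ j, 1 ≤ j → j ≤ 8*s → 0 < γ j t)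
    (hγratio : ∀ t : ℝ, 0 ≤ t → ∀ j, 2 ≤ j → j ≤ 8*s → 1/2 ≤ γ (j-1) t / γ j t)
    (hγ1b : ∀ t : ℝ, 0 ≤ t → γ 1 t ≤ 1/(s:ℝ))
    (hΓb : ∀ t : ℝ, 0 ≤ t → 1 - 2/(s:ℝ) ≤ Γ t ∧ Γ t ≤ 1)
    (hδlt : ∀ t : ℝ, 0 ≤ t → 0 < 1/(s:ℝ) - δ t)
    (hmono : MonotoneOn Φ (Set.Ici (0:ℝ)))
    (hΦ0 : Φ 0 = ρ) :
    1/2 ≤ Φ (144 * (s:ℝ) * Real.logb 2 (1/ρ)) := by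
  have hs0 : (0 : ℝ) < s := Nat.cast_pos.2 (by omega)
  have hΓ₀ : ∀ t, 0 ≤ t → 15 / 16 ≤ Γ t := fun t ht => by
    have hs32 : (32 : ℝ) ≤ s := by exact_mod_cast hs
    have : 2 / (s : ℝ) ≤ 1 / 16 := by rw [div_le_iff₀ hs0]; linarith
    linarith [(hΓb t ht).1]
  have hcascade : IsAdvantageCascade (8 * s) ξ ηj := by
    refine ⟨fun t ht => ?_, fun t ht => ?_, fun j hj t ht => ?_⟩
    · have hΓ0 : 0 < Γ t := by linarith [hΓ₀ t ht]
      refine ⟨Γ t, δ t * Γ t / (1 / s - δ t), (Γ t - 2 * B t) / Γ t, hΓ₀ t ht,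
        div_nonneg (mul_nonneg (hδb t ht).1 hΓ0.le) (hδlt t ht).le,
        delta_mul_div_le_one_fourth hs0 (hδb t ht).1 (hδb t ht).2 (hΓb t ht).2, fun y hy => ?_,
        hasDerivAt_xi hξ (hderivα t ht) (hderivδ t ht) (hδlt t ht).ne' hΓ0.ne'⟩
      rw [hΓ, hB]
      refine le_aggregate_advantage (Finset.nonempty_Icc.2 (by omega)) (fun j hj => ?_)
        fun j hj => ?_
      · exact hγpos t ht j (Finset.mem_Icc.1 hj).1 (Finset.mem_Icc.1 hj).2
      · exact hηj j (Finset.mem_Icc.1 hj).1 (Finset.mem_Icc.1 hj).2 t ▸ hy j hj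
    · have hγ₁ := hγpos t ht 1 le_rfl (by omega)
      refine ⟨_, three_eighths_le_eta_one_rate hs0 (hδb t ht).2 (hΓ₀ t ht) hγ₁ (hγ1b t ht), ?_⟩
      rw [hξ]
      exact hasDerivAt_eta_one (hηj 1 le_rfl (by omega)) (hderivγ1 t ht) (hderivβ1 t ht) hγ₁.ne'
        (hδlt t ht).ne' (by linarith [hΓ₀ t ht])
    · obtain ⟨hj2, hjN⟩ := Finset.mem_Icc.1 hj
      refine ⟨γ (j - 1) t / γ j t, by linarith [hγratio t ht j hj2 hjN], ?_⟩
      rw [hηj (j - 1) (by omega) (by omega)]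
      exact hasDerivAt_advantage (hηj j (by omega) hjN) (hderivγ j hj2 hjN t ht)
        (hderivβ j hj2 hjN t ht) (hγpos t ht j (by omega) hjN).ne'
        (hγpos t ht (j - 1) (by omega) (by omega)).ne'
  convert half_le_of_min_sqrt_two_mul_le hρ (by linarith) (by positivity) hmono hΦ0
    fun t ht hpos hhalf => hcascade.min_sqrt_two_mul_le (by omega) hΦ hmono ht hpos hhalf using 2
  push_cast
  ring
end
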